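/- arXiv:2211.10389 — 3 statements merged into one kernel-verified Lean document; each statement's English description precedes it below -/
import Mathlib

section
/- For any two excitation multiindices μ, ν ∈ ℐ, the restriction to the N-particle space ℋ of the composition X_μ ∘ X_ν is either the zero map, or equal to ε · X_λ|_ℋ for a sign ε ∈ {+1, −1} and a unique excitation multiindex λ ∈ ℐ of rank |μ| + |ν| (the latter case can only occur when |μ| + |ν| ≤ N and the occupied index sets, respectively the virtual index sets, of μ and ν are disjoint). In particular, the span 𝔟 of the restricted excitation operators is closed under composition. -/
set_option synthInstance.maxHeartbeats 1000000
set_option maxHeartbeats 1000000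

namespace CC

abbrev FockSpace (K : ℕ) := (Fin K → Bool) → ℝ

noncomputable def eVec (K : ℕ) (k : Fin K → Bool) : FockSpace K := Pi.single k 1

def nTrue (K : ℕ) (k : Fin K → Bool) : ℕ :=
  (Finset.univ.filter fun j => k j = true).card

def sgn (K : ℕ) (i : Fin K) (k : Fin K → Bool) : ℝ :=
  (-1 : ℝ) ^ (Finset.univ.filter fun j => j < i ∧ k j = true).card

noncomputable def creOp (K : ℕ) (i : Fin K) : Module.End ℝ (FockSpace K) where
  toFun f := fun m =>
    if m i = true then
      sgn K i (Function.update m i false) * f (Function.update m i false)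
    else 0
  map_add' f g := by
    funext m
    by_cases h : m i = true <;> simp [h, mul_add]
  map_smul' c f := by
    funext m
    by_cases h : m i = true <;> simp [h] <;> ring

noncomputable def annOp (K : ℕ) (i : Fin K) : Module.End ℝ (FockSpace K) where
  toFun f := fun m =>
    if m i = true then 0
    else sgn K i m * f (Function.update m i true)
  map_add' f g := by
    funext m
    by_cases h : m i = true <;> simp [h, mul_add]
  map_smul' c f := by
    funext m
    by_cases h : m i = true <;> simp [h] <;> ring

structure ExIdx (K N : ℕ) where
  r : ℕ
  r_pos : 1 ≤ r
  r_le : r ≤ N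
  occ : Fin r → Fin K
  vir : Fin r → Fin K
  occ_mono : StrictMono occ
  vir_mono : StrictMono vir
  occ_lt : ∀ j, ((occ j : Fin K) : ℕ) < N
  vir_ge : ∀ j, N ≤ ((vir j : Fin K) : ℕ)

noncomputable def excOp (K N : ℕ) (μ : ExIdx K N) : Module.End ℝ (FockSpace K) :=
  (List.ofFn fun j => creOp K (μ.vir j)).prod *
    ((List.ofFn fun j => annOp K (μ.occ j)).reverse).prod

noncomputable def dexcOp (K N : ℕ) (μ : ExIdx K N) : Module.End ℝ (FockSpace K) :=
  (List.ofFn fun j => creOp K (μ.occ j)).prod *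
    ((List.ofFn fun j => annOp K (μ.vir j)).reverse).prod

noncomputable def Hspace (K N : ℕ) : Submodule ℝ (FockSpace K) :=
  Submodule.span ℝ {f | ∃ k : Fin K → Bool, nTrue K k = N ∧ f = eVec K k}

def refOcc (K N : ℕ) : Fin K → Bool := fun j => decide ((j : ℕ) < N)

noncomputable def refVec (K N : ℕ) : FockSpace K := eVec K (refOcc K N)

abbrev ExcInvariant (K N : ℕ) : Prop :=
  ∀ μ : ExIdx K N, ∀ x ∈ Hspace K N, excOp K N μ x ∈ Hspace K N

noncomputable def excResL (K N : ℕ) (hX : ExcInvariant K N) (μ : ExIdx K N) :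
    Hspace K N →L[ℝ] Hspace K N :=
  LinearMap.toContinuousLinearMap ((excOp K N μ).restrict (hX μ))

noncomputable def clusterSpace (K N : ℕ) (hX : ExcInvariant K N) :
    Submodule ℝ (Hspace K N →L[ℝ] Hspace K N) :=
  Submodule.span ℝ (Set.range (excResL K N hX))

noncomputable def Gset (K N : ℕ) (hX : ExcInvariant K N) :
    Set (Hspace K N →L[ℝ] Hspace K N) :=
  {G | ∃ C ∈ clusterSpace K N hX, G = 1 + C}

noncomputable def ip (K : ℕ) (f g : FockSpace K) : ℝ :=
  ∑ k : Fin K → Bool, f k * g k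

lemma nTrue_refOcc (K N : ℕ) (h : N ≤ K) : nTrue K (refOcc K N) = N := by
  unfold nTrue refOcc
  have : (Finset.univ.filter fun j : Fin K => decide ((j : ℕ) < N) = true)
      = Finset.map (Fin.castLEEmb h) Finset.univ := by
    ext j
    simp only [Finset.mem_filter, Finset.mem_univ, true_and, decide_eq_true_eq,
      Finset.mem_map, Fin.castLEEmb_apply]
    constructor
    · intro hj
      exact ⟨⟨(j : ℕ), hj⟩, by ext; simp⟩
    · rintro ⟨i, -, rfl⟩
      simpa using i.isLt
  rw [this]
  simp

lemma refVec_mem (K N : ℕ) (h : N ≤ K) : refVec K N ∈ Hspace K N :=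
  Submodule.subset_span ⟨refOcc K N, nTrue_refOcc K N h, rfl⟩

noncomputable def refState (K N : ℕ) (h : N ≤ K) : Hspace K N :=
  ⟨refVec K N, refVec_mem K N h⟩

noncomputable instance instTopRingCLM (K N : ℕ) :
    IsTopologicalRing (Hspace K N →L[ℝ] Hspace K N) := by
  exact @NonUnitalSeminormedRing.toIsTopologicalRing (Hspace K N →L[ℝ] Hspace K N) _

noncomputable def expE (K N : ℕ) (T : Hspace K N →L[ℝ] Hspace K N) :
    Hspace K N →L[ℝ] Hspace K N :=
  NormedSpace.exp T


variable {K N : ℕ}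

lemma sgn_ne_zero (i : Fin K) (k : Fin K → Bool) : sgn K i k ≠ 0 :=
  pow_ne_zero _ (by norm_num)

lemma sgn_update_self (i : Fin K) (m : Fin K → Bool) (b : Bool) :
    sgn K i (Function.update m i b) = sgn K i m := by
  unfold sgn
  congr 2
  ext l
  simp only [Finset.mem_filter, Finset.mem_univ, true_and, Function.update_apply]
  constructor <;> rintro ⟨h1, h2⟩ <;> refine ⟨h1, ?_⟩
  · rwa [if_neg (ne_of_lt h1)] at h2
  · rwa [if_neg (ne_of_lt h1)]

lemma sgn_update_true (i j : Fin K) (m : Fin K → Bool) (hm : m j = false) :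
    sgn K i (Function.update m j true) = (if j < i then (-1:ℝ) else 1) * sgn K i m := by
  unfold sgn
  by_cases hj : j < i
  · have he : (Finset.univ.filter fun l => l < i ∧ Function.update m j true l = true)
        = insert j (Finset.univ.filter fun l => l < i ∧ m l = true) := by
      ext l
      simp only [Finset.mem_filter, Finset.mem_insert, Finset.mem_univ, true_and,
        Function.update_apply]
      by_cases hl : l = j
      · subst hl; simp [hj]
      · simp [hl]
    rw [he, Finset.card_insert_of_notMem (by simp [hm]), if_pos hj, pow_succ]
    ring
  · have he : (Finset.univ.filter fun l => l < i ∧ Function.update m j true l = true)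
        = Finset.univ.filter fun l => l < i ∧ m l = true := by
      ext l
      simp only [Finset.mem_filter, Finset.mem_univ, true_and, Function.update_apply]
      constructor <;> rintro ⟨h1, h2⟩ <;> refine ⟨h1, ?_⟩ <;>
        have hlj : l ≠ j := by rintro rfl; exact hj h1
      · rwa [if_neg hlj] at h2
      · rwa [if_neg hlj]
    rw [he, if_neg hj, one_mul]

lemma sgn_update_false (i j : Fin K) (m : Fin K → Bool) (hm : m j = true) :
    sgn K i (Function.update m j false) = (if j < i then (-1:ℝ) else 1) * sgn K i m := by
  have h := sgn_update_true (K := K) i j (Function.update m j false) (by simp)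
  rw [Function.update_idem] at h
  rw [show Function.update m j true = m by rw [← hm]; exact Function.update_eq_self j m] at h
  by_cases hj : j < i <;> simp only [if_pos, if_neg, hj, if_true, if_false] at h ⊢ <;> linarith

lemma creOp_eVec (i : Fin K) (k : Fin K → Bool) :
    creOp K i (eVec K k) =
      if k i = true then 0 else sgn K i k • eVec K (Function.update k i true) := by
  funext m
  simp only [creOp, LinearMap.coe_mk, AddHom.coe_mk]
  by_cases hk : k i = true
  · rw [if_pos hk]
    by_cases hm : m i = true
    · rw [if_pos hm]
      have hne : Function.update m i false ≠ k := by
        intro h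
        have := congrFun h i
        simp [hk] at this
      simp [eVec, Pi.single_apply, hne]
    · rw [if_neg hm]; rfl
  · rw [if_neg hk]
    by_cases hm : m i = true
    · rw [if_pos hm]
      by_cases hmk : Function.update m i false = k
      · have hmu : m = Function.update k i true := by
          rw [← hmk, Function.update_idem, eq_comm]
          rw [show true = m i from hm.symm]
          exact Function.update_eq_self i m
        rw [hmk]
        simp [eVec, Pi.single_apply, hmu]
      · have hmu : m ≠ Function.update k i true := by
          intro h
          apply hmk
          rw [h, Function.update_idem]
          funext l
          by_cases hl : l = i
          · subst hl; simp [hk, eq_comm]  -- update k i false i = false, k i = false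
          · simp [hl]
        simp [eVec, Pi.single_apply, hmk, hmu]
    · rw [if_neg hm]
      have hmu : m ≠ Function.update k i true := by
        intro h
        rw [h] at hm
        simp at hm
      simp [eVec, Pi.single_apply, hmu]

lemma annOp_eVec (i : Fin K) (k : Fin K → Bool) :
    annOp K i (eVec K k) =
      if k i = true then sgn K i (Function.update k i false) • eVec K (Function.update k i false)
      else 0 := by
  funext m
  simp only [annOp, LinearMap.coe_mk, AddHom.coe_mk]
  by_cases hk : k i = true
  · rw [if_pos hk]
    by_cases hm : m i = true
    · rw [if_pos hm]
      have hmu : m ≠ Function.update k i false := by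
        intro h
        rw [h] at hm; simp at hm
      simp [eVec, Pi.single_apply, hmu]
    · rw [if_neg hm]
      by_cases hmk : Function.update m i true = k
      · have hmu : m = Function.update k i false := by
          rw [← hmk, Function.update_idem, eq_comm]
          have : false = m i := (Bool.not_eq_true _).mp hm |>.symm
          rw [this]
          exact Function.update_eq_self i m
        rw [hmk]
        rw [← hmu]
        simp [eVec, Pi.single_apply, hmu]
      · have hmu : m ≠ Function.update k i false := by
          intro h
          apply hmk
          rw [h, Function.update_idem]
          funext l
          by_cases hl : l = i
          · subst hl; simp [hk]
          · simp [hl]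
        simp [eVec, Pi.single_apply, hmk, hmu]
  · rw [if_neg hk]
    by_cases hm : m i = true
    · simp [hm]
    · rw [if_neg hm]
      have hmk : Function.update m i true ≠ k := by
        intro h
        have := congrFun h i
        simp [hk] at this
      simp [eVec, Pi.single_apply, hmk]

lemma cre_cre_anticomm (i j : Fin K) (h : i ≠ j) :
    creOp K i * creOp K j = -(creOp K j * creOp K i) := by
  apply LinearMap.ext; intro f
  funext m
  have h1 : Function.update m i false j = m j := Function.update_of_ne (Ne.symm h) _ _
  have h2 : Function.update m j false i = m i := Function.update_of_ne h _ _
  simp only [Module.End.mul_apply, LinearMap.neg_apply, Pi.neg_apply, creOp,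
    LinearMap.coe_mk, AddHom.coe_mk, h1, h2]
  by_cases hmi : m i = true <;> by_cases hmj : m j = true <;>
    simp only [hmi, hmj, if_true, if_false, Bool.false_eq_true, mul_zero, neg_zero]
  have e1 : Function.update (Function.update m i false) j false
      = Function.update (Function.update m j false) i false := Function.update_comm h _ _ _
  rw [sgn_update_self, sgn_update_self, sgn_update_self, sgn_update_self,
    sgn_update_false j i m hmi, sgn_update_false i j m hmj, e1]
  rcases h.lt_or_gt with hlt | hlt
  · rw [if_pos hlt, if_neg (asymm hlt)]; ring
  · rw [if_neg (asymm hlt), if_pos hlt]; ring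

lemma ann_ann_anticomm (i j : Fin K) (h : i ≠ j) :
    annOp K i * annOp K j = -(annOp K j * annOp K i) := by
  apply LinearMap.ext; intro f
  funext m
  have h1 : Function.update m i true j = m j := Function.update_of_ne (Ne.symm h) _ _
  have h2 : Function.update m j true i = m i := Function.update_of_ne h _ _
  simp only [Module.End.mul_apply, LinearMap.neg_apply, Pi.neg_apply, annOp,
    LinearMap.coe_mk, AddHom.coe_mk, h1, h2]
  by_cases hmi : m i = true <;> by_cases hmj : m j = true <;>
    simp only [hmi, hmj, if_true, if_false, Bool.false_eq_true, mul_zero, neg_zero]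
  have hmi' : m i = false := by simpa using hmi
  have hmj' : m j = false := by simpa using hmj
  have e1 : Function.update (Function.update m i true) j true
      = Function.update (Function.update m j true) i true := Function.update_comm h _ _ _
  rw [sgn_update_true j i m hmi', sgn_update_true i j m hmj', e1]
  rcases h.lt_or_gt with hlt | hlt
  · rw [if_pos hlt, if_neg (asymm hlt)]; ring
  · rw [if_neg (asymm hlt), if_pos hlt]; ring

lemma cre_ann_anticomm (i j : Fin K) (h : i ≠ j) :
    creOp K i * annOp K j = -(annOp K j * creOp K i) := by
  apply LinearMap.ext; intro f
  funext m
  have h1 : Function.update m i false j = m j := Function.update_of_ne (Ne.symm h) _ _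
  have h2 : Function.update m j true i = m i := Function.update_of_ne h _ _
  simp only [Module.End.mul_apply, LinearMap.neg_apply, Pi.neg_apply, annOp, creOp,
    LinearMap.coe_mk, AddHom.coe_mk, h1, h2]
  by_cases hmi : m i = true <;> by_cases hmj : m j = true <;>
    simp only [hmi, hmj, if_true, if_false, Bool.false_eq_true, mul_zero, neg_zero]
  have hmj' : m j = false := by simpa using hmj
  have e1 : Function.update (Function.update m i false) j true
      = Function.update (Function.update m j true) i false := Function.update_comm h _ _ _
  rw [sgn_update_self, sgn_update_self, sgn_update_false j i m hmi,
    sgn_update_true i j m hmj', e1]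
  rcases h.lt_or_gt with hlt | hlt
  · rw [if_pos hlt, if_neg (asymm hlt)]; ring
  · rw [if_neg (asymm hlt), if_pos hlt]; ring

/-- An elementary operator: index together with a flag (`true` = creation). -/
noncomputable def toEnd (o : Fin K × Bool) : Module.End ℝ (FockSpace K) :=
  if o.2 then creOp K o.1 else annOp K o.1

lemma toEnd_anticomm (o₁ o₂ : Fin K × Bool) (h : o₁.1 ≠ o₂.1) :
    toEnd o₁ * toEnd o₂ = -(toEnd o₂ * toEnd o₁) := by
  unfold toEnd
  rcases o₁ with ⟨i, bi⟩; rcases o₂ with ⟨j, bj⟩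
  simp only at h ⊢
  cases bi <;> cases bj <;> simp only [if_true, if_false, Bool.false_eq_true]
  · exact ann_ann_anticomm i j h
  · rw [cre_ann_anticomm j i (Ne.symm h), neg_neg]
  · exact cre_ann_anticomm i j h
  · exact cre_cre_anticomm i j h

noncomputable def prodOps (L : List (Fin K × Bool)) : Module.End ℝ (FockSpace K) :=
  (L.map toEnd).prod

lemma prodOps_perm : ∀ {L₁ L₂ : List (Fin K × Bool)}, L₁.Perm L₂ →
    (L₁.map Prod.fst).Nodup →
    ∃ ε : ℝ, (ε = 1 ∨ ε = -1) ∧ prodOps L₁ = ε • prodOps L₂ := by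
  intro L₁ L₂ hp
  induction hp with
  | nil => exact fun _ => ⟨1, Or.inl rfl, (one_smul _ _).symm⟩
  | cons a h ih =>
      intro hnd
      simp only [List.map_cons, List.nodup_cons] at hnd
      obtain ⟨ε, hε, he⟩ := ih hnd.2
      refine ⟨ε, hε, ?_⟩
      simp only [prodOps, List.map_cons, List.prod_cons] at he ⊢
      rw [he, mul_smul_comm]
  | swap a b l =>
      intro hnd
      simp only [List.map_cons, List.nodup_cons, List.mem_cons] at hnd
      have hab : b.1 ≠ a.1 := fun hh => hnd.1 (Or.inl hh)
      refine ⟨-1, Or.inr rfl, ?_⟩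
      have hkey : prodOps (b :: a :: l) = -(prodOps (a :: b :: l)) := by
        simp only [prodOps, List.map_cons, List.prod_cons, ← mul_assoc,
          toEnd_anticomm b a hab]
        exact neg_mul (toEnd a * toEnd b) (List.map toEnd l).prod
      exact hkey.trans (neg_one_smul ℝ _).symm
  | trans p₁ p₂ ih₁ ih₂ =>
      intro hnd
      obtain ⟨ε₁, hε₁, he₁⟩ := ih₁ hnd
      obtain ⟨ε₂, hε₂, he₂⟩ := ih₂ ((p₁.map Prod.fst).nodup_iff.mp hnd)
      refine ⟨ε₁ * ε₂, ?_, by rw [he₁, he₂, smul_smul]⟩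
      rcases hε₁ with rfl | rfl <;> rcases hε₂ with rfl | rfl <;> simp

def maskF (l : List (Fin K)) (k : Fin K → Bool) : Fin K → Bool :=
  fun x => if x ∈ l then false else k x

def maskT (l : List (Fin K)) (k : Fin K → Bool) : Fin K → Bool :=
  fun x => if x ∈ l then true else k x

lemma ann_chain (l : List (Fin K)) (k : Fin K → Bool) :
    ∃ c : ℝ, ((l.map (annOp K)).prod) (eVec K k) = c • eVec K (maskF l k) ∧
      (c ≠ 0 ↔ (l.Nodup ∧ ∀ i ∈ l, k i = true)) := by
  induction l with
  | nil =>
      refine ⟨1, ?_, by simp⟩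
      have : maskF [] k = k := by funext x; simp [maskF]
      simp [this]
  | cons a t ih =>
      obtain ⟨c, hc, hiff⟩ := ih
      have hstep : (((a :: t).map (annOp K)).prod) (eVec K k)
          = annOp K a ((((t.map (annOp K))).prod) (eVec K k)) := by
        rw [List.map_cons, List.prod_cons, Module.End.mul_apply]
      by_cases hma : maskF t k a = true
      · have hat : a ∉ t ∧ k a = true := by
          by_cases h1 : a ∈ t
          · exfalso; simp [maskF, h1] at hma
          · exact ⟨h1, by simpa [maskF, h1] using hma⟩
        have hupd : Function.update (maskF t k) a false = maskF (a :: t) k := by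
          funext x
          by_cases hx : x = a
          · subst hx; simp [maskF]
          · simp [Function.update_apply, hx, maskF, List.mem_cons]
        refine ⟨c * sgn K a (Function.update (maskF t k) a false), ?_, ?_⟩
        · rw [hstep, hc, map_smul, annOp_eVec, if_pos hma, hupd, smul_smul]
        · rw [mul_ne_zero_iff, and_iff_left (sgn_ne_zero _ _), hiff, List.nodup_cons]
          constructor
          · rintro ⟨h1, h2⟩
            exact ⟨⟨hat.1, h1⟩, by intro i hi; rcases List.mem_cons.mp hi with rfl | hi
                                   exacts [hat.2, h2 i hi]⟩
          · rintro ⟨⟨_, h1⟩, h2⟩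
            exact ⟨h1, fun i hi => h2 i (List.mem_cons_of_mem a hi)⟩
      · refine ⟨0, ?_, ?_⟩
        · rw [hstep, hc, map_smul, annOp_eVec, if_neg hma, smul_zero, zero_smul]
        · simp only [ne_eq, not_true_eq_false, false_iff, not_not]
          intro hcon
          rcases hcon with ⟨hnd, hall⟩
          have h1 : a ∉ t := (List.nodup_cons.mp hnd).1
          have h2 : k a = true := hall a (List.mem_cons_self)
          exact hma (by simp [maskF, h1, h2])

lemma cre_chain (l : List (Fin K)) (k : Fin K → Bool) :
    ∃ c : ℝ, ((l.map (creOp K)).prod) (eVec K k) = c • eVec K (maskT l k) ∧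
      (c ≠ 0 ↔ (l.Nodup ∧ ∀ i ∈ l, k i = false)) := by
  induction l with
  | nil =>
      refine ⟨1, ?_, by simp⟩
      have : maskT [] k = k := by funext x; simp [maskT]
      simp [this]
  | cons a t ih =>
      obtain ⟨c, hc, hiff⟩ := ih
      have hstep : (((a :: t).map (creOp K)).prod) (eVec K k)
          = creOp K a ((((t.map (creOp K))).prod) (eVec K k)) := by
        rw [List.map_cons, List.prod_cons, Module.End.mul_apply]
      by_cases hma : maskT t k a = true
      · refine ⟨0, ?_, ?_⟩
        · rw [hstep, hc, map_smul, creOp_eVec, if_pos hma, smul_zero, zero_smul]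
        · simp only [ne_eq, not_true_eq_false, false_iff, not_not]
          intro hcon
          rcases hcon with ⟨hnd, hall⟩
          have h1 : a ∉ t := (List.nodup_cons.mp hnd).1
          have h2 : k a = false := hall a (List.mem_cons_self)
          have : maskT t k a = false := by simp [maskT, h1, h2]
          rw [this] at hma; exact Bool.false_ne_true hma
      · have hma' : maskT t k a = false := by simpa using hma
        have hat : a ∉ t ∧ k a = false := by
          by_cases h1 : a ∈ t
          · exfalso; simp [maskT, h1] at hma'
          · exact ⟨h1, by simpa [maskT, h1] using hma'⟩
        have hupd : Function.update (maskT t k) a true = maskT (a :: t) k := by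
          funext x
          by_cases hx : x = a
          · subst hx; simp [maskT]
          · simp [Function.update_apply, hx, maskT, List.mem_cons]
        refine ⟨c * sgn K a (maskT t k), ?_, ?_⟩
        · rw [hstep, hc, map_smul, creOp_eVec, if_neg (by simp [hma']), hupd, smul_smul]
        · rw [mul_ne_zero_iff, and_iff_left (sgn_ne_zero _ _), hiff, List.nodup_cons]
          constructor
          · rintro ⟨h1, h2⟩
            exact ⟨⟨hat.1, h1⟩, by intro i hi; rcases List.mem_cons.mp hi with rfl | hi
                                   exacts [hat.2, h2 i hi]⟩
          · rintro ⟨⟨_, h1⟩, h2⟩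
            exact ⟨h1, fun i hi => h2 i (List.mem_cons_of_mem a hi)⟩

lemma toEnd_true (i : Fin K) : toEnd (i, true) = creOp K i := if_pos rfl

lemma toEnd_false (i : Fin K) : toEnd (i, false) = annOp K i := by simp [toEnd]

def opsOf (μ : ExIdx K N) : List (Fin K × Bool) :=
  (List.ofFn fun j => ((μ.vir j : Fin K), true))
    ++ (List.ofFn fun j => ((μ.occ j : Fin K), false)).reverse

lemma excOp_eq_prodOps (μ : ExIdx K N) : excOp K N μ = prodOps (opsOf μ) := by
  have h1 : ((List.ofFn fun j => ((μ.vir j : Fin K), true)).map toEnd)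
      = List.ofFn fun j => creOp K (μ.vir j) := by
    rw [List.map_ofFn]
    exact congrArg List.ofFn (funext fun j => toEnd_true (μ.vir j))
  have h2 : (((List.ofFn fun j => ((μ.occ j : Fin K), false)).reverse).map toEnd)
      = (List.ofFn fun j => annOp K (μ.occ j)).reverse := by
    rw [List.map_reverse, List.map_ofFn]
    exact congrArg List.reverse (congrArg List.ofFn (funext fun j => toEnd_false (μ.occ j)))
  unfold prodOps opsOf
  rw [List.map_append, h1, h2, List.prod_append]
  rfl

lemma excOp_mul_eq (μ ν : ExIdx K N) :
    excOp K N μ * excOp K N ν = prodOps (opsOf μ ++ opsOf ν) := by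
  rw [excOp_eq_prodOps, excOp_eq_prodOps]
  unfold prodOps
  rw [List.map_append, List.prod_append]

def cfgOf (μ : ExIdx K N) (k : Fin K → Bool) : Fin K → Bool :=
  maskT (List.ofFn μ.vir) (maskF (List.ofFn μ.occ) k)

lemma occ_ne_vir (μ ν : ExIdx K N) (j j') : μ.occ j ≠ ν.vir j' := by
  intro h
  have h1 := μ.occ_lt j
  have h2 := ν.vir_ge j'
  rw [h] at h1
  omega

lemma excOp_eVec (μ : ExIdx K N) (k : Fin K → Bool) :
    ∃ c : ℝ, excOp K N μ (eVec K k) = c • eVec K (cfgOf μ k) ∧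
      (c ≠ 0 ↔ ((∀ j, k (μ.occ j) = true) ∧ (∀ j, k (μ.vir j) = false))) := by
  obtain ⟨c1, hc1, hiff1⟩ := ann_chain ((List.ofFn μ.occ).reverse) k
  obtain ⟨c2, hc2, hiff2⟩ := cre_chain (List.ofFn μ.vir) (maskF ((List.ofFn μ.occ).reverse) k)
  have hnd1 : ((List.ofFn μ.occ).reverse).Nodup :=
    List.nodup_reverse.mpr (List.nodup_ofFn.mpr μ.occ_mono.injective)
  have hnd2 : (List.ofFn μ.vir).Nodup := List.nodup_ofFn.mpr μ.vir_mono.injective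
  have hmm : maskF ((List.ofFn μ.occ).reverse) k = maskF (List.ofFn μ.occ) k := by
    funext x; simp [maskF, List.mem_reverse]
  have hrw : ((List.ofFn fun j => annOp K (μ.occ j)).reverse)
      = ((List.ofFn μ.occ).reverse).map (annOp K) := by
    rw [List.map_reverse, List.map_ofFn]; rfl
  have hrw2 : (List.ofFn fun j => creOp K (μ.vir j)) = (List.ofFn μ.vir).map (creOp K) := by
    rw [List.map_ofFn]; rfl
  refine ⟨c1 * c2, ?_, ?_⟩
  · have hstep : excOp K N μ (eVec K k) = ((List.ofFn μ.vir).map (creOp K)).prod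
        ((((List.ofFn μ.occ).reverse).map (annOp K)).prod (eVec K k)) := by
      unfold excOp
      rw [Module.End.mul_apply, hrw, hrw2]
    rw [hstep, hc1, map_smul, hc2, smul_smul, cfgOf, ← hmm]
  · rw [mul_ne_zero_iff, hiff1, hiff2, and_iff_right hnd1, and_iff_right hnd2]
    constructor
    · rintro ⟨h1, h2⟩
      refine ⟨fun j => h1 _ (by simp [List.mem_reverse, List.mem_ofFn]), fun j => ?_⟩
      have hmem : μ.vir j ∈ List.ofFn μ.vir := by simp [List.mem_ofFn]
      have hv := h2 (μ.vir j) hmem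
      have hnot : μ.vir j ∉ (List.ofFn μ.occ).reverse := by
        simp only [List.mem_reverse, List.mem_ofFn, Set.mem_range, not_exists]
        intro j' hj'
        exact occ_ne_vir μ μ j' j hj'
      simpa [maskF, hnot] using hv
    · rintro ⟨h1, h2⟩
      constructor
      · intro i hi
        rw [List.mem_reverse, List.mem_ofFn] at hi
        obtain ⟨j, rfl⟩ := hi
        exact h1 j
      · intro i hi
        rw [List.mem_ofFn] at hi
        obtain ⟨j, rfl⟩ := hi
        have hnot : μ.vir j ∉ (List.ofFn μ.occ).reverse := by
          simp only [List.mem_reverse, List.mem_ofFn, Set.mem_range, not_exists]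
          intro j' hj'
          exact occ_ne_vir μ μ j' j hj'
        simp [maskF, hnot, h2 j]

lemma op_eq_of_eVec {T S : Module.End ℝ (FockSpace K)}
    (h : ∀ k, T (eVec K k) = S (eVec K k)) : T = S := by
  apply Module.Basis.ext (Pi.basisFun ℝ (Fin K → Bool))
  intro k
  simpa [Pi.basisFun_apply, eVec] using h k

lemma mem_opsOf (μ : ExIdx K N) (p : Fin K × Bool) :
    p ∈ opsOf μ ↔ ((p.2 = true ∧ ∃ j, μ.vir j = p.1) ∨ (p.2 = false ∧ ∃ j, μ.occ j = p.1)) := by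
  rcases p with ⟨x, b⟩
  simp only [opsOf, List.mem_append, List.mem_reverse, List.mem_ofFn, Set.mem_range,
    Prod.mk.injEq]
  cases b <;> simp [Prod.ext_iff] <;> tauto

lemma map_fst_opsOf (μ : ExIdx K N) :
    (opsOf μ).map Prod.fst = (List.ofFn μ.vir) ++ (List.ofFn μ.occ).reverse := by
  unfold opsOf
  rw [List.map_append, List.map_reverse, List.map_ofFn, List.map_ofFn]
  rfl

lemma nodup_fst_opsOf (μ : ExIdx K N) : ((opsOf μ).map Prod.fst).Nodup := by
  rw [map_fst_opsOf, List.nodup_append]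
  refine ⟨List.nodup_ofFn.mpr μ.vir_mono.injective,
    List.nodup_reverse.mpr (List.nodup_ofFn.mpr μ.occ_mono.injective), ?_⟩
  intro x hx x' hx' hxx
  subst hxx
  rw [List.mem_ofFn] at hx
  rw [List.mem_reverse, List.mem_ofFn] at hx'
  obtain ⟨j, rfl⟩ := hx
  obtain ⟨j', hj'⟩ := hx'
  exact occ_ne_vir μ μ j' j hj'

lemma nodup_fst_append (μ ν : ExIdx K N)
    (hdo : Disjoint (Set.range μ.occ) (Set.range ν.occ))
    (hdv : Disjoint (Set.range μ.vir) (Set.range ν.vir)) :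
    (((opsOf μ ++ opsOf ν)).map Prod.fst).Nodup := by
  rw [List.map_append, List.nodup_append]
  refine ⟨nodup_fst_opsOf μ, nodup_fst_opsOf ν, ?_⟩
  intro x hx x' hx' hxx
  subst hxx
  rw [map_fst_opsOf] at hx hx'
  simp only [List.mem_append, List.mem_reverse, List.mem_ofFn, Set.mem_range] at hx hx'
  rcases hx with ⟨j, rfl⟩ | ⟨j, rfl⟩ <;> rcases hx' with ⟨j', hj'⟩ | ⟨j', hj'⟩
  · exact Set.disjoint_left.mp hdv ⟨j, rfl⟩ ⟨j', hj'⟩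
  · exact occ_ne_vir ν μ j' j hj'
  · exact occ_ne_vir μ ν j j' hj'.symm
  · exact Set.disjoint_left.mp hdo ⟨j, rfl⟩ ⟨j', hj'⟩

lemma card_filter_lt (hNK : N ≤ K) :
    (Finset.univ.filter fun x : Fin K => (x : ℕ) < N).card = N := by
  have h : (Finset.univ.filter fun j : Fin K => (j : ℕ) < N)
      = Finset.map (Fin.castLEEmb hNK) Finset.univ := by
    ext j
    simp only [Finset.mem_filter, Finset.mem_univ, true_and, Finset.mem_map,
      Fin.castLEEmb_apply]
    constructor
    · intro hj
      exact ⟨⟨(j : ℕ), hj⟩, by ext; simp⟩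
    · rintro ⟨i, -, rfl⟩
      simpa using i.isLt
  rw [h]
  simp

lemma exists_lam (hNK : N ≤ K) (μ ν : ExIdx K N)
    (hdo : Disjoint (Set.range μ.occ) (Set.range ν.occ))
    (hdv : Disjoint (Set.range μ.vir) (Set.range ν.vir)) :
    ∃ lam : ExIdx K N, lam.r = μ.r + ν.r ∧
      ∃ ε : ℝ, (ε = 1 ∨ ε = -1) ∧ excOp K N μ * excOp K N ν = ε • excOp K N lam := by
  classical
  set sO : Finset (Fin K) := (Finset.univ.image μ.occ) ∪ (Finset.univ.image ν.occ) with hsO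
  set sV : Finset (Fin K) := (Finset.univ.image μ.vir) ∪ (Finset.univ.image ν.vir) with hsV
  have hdisjO : Disjoint (Finset.univ.image μ.occ) (Finset.univ.image ν.occ) := by
    rw [Finset.disjoint_left]
    intro x hx hx'
    simp only [Finset.mem_image, Finset.mem_univ, true_and] at hx hx'
    obtain ⟨j, rfl⟩ := hx
    obtain ⟨j', hj'⟩ := hx'
    exact Set.disjoint_left.mp hdo ⟨j, rfl⟩ ⟨j', hj'⟩
  have hdisjV : Disjoint (Finset.univ.image μ.vir) (Finset.univ.image ν.vir) := by
    rw [Finset.disjoint_left]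
    intro x hx hx'
    simp only [Finset.mem_image, Finset.mem_univ, true_and] at hx hx'
    obtain ⟨j, rfl⟩ := hx
    obtain ⟨j', hj'⟩ := hx'
    exact Set.disjoint_left.mp hdv ⟨j, rfl⟩ ⟨j', hj'⟩
  have hcardO : sO.card = μ.r + ν.r := by
    rw [hsO, Finset.card_union_of_disjoint hdisjO,
      Finset.card_image_of_injective _ μ.occ_mono.injective,
      Finset.card_image_of_injective _ ν.occ_mono.injective]
    simp
  have hcardV : sV.card = μ.r + ν.r := by
    rw [hsV, Finset.card_union_of_disjoint hdisjV,
      Finset.card_image_of_injective _ μ.vir_mono.injective,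
      Finset.card_image_of_injective _ ν.vir_mono.injective]
    simp
  have hmemO : ∀ x, x ∈ sO ↔ ((∃ j, μ.occ j = x) ∨ ∃ j, ν.occ j = x) := by
    intro x
    simp [hsO, Finset.mem_union, Finset.mem_image]
  have hmemV : ∀ x, x ∈ sV ↔ ((∃ j, μ.vir j = x) ∨ ∃ j, ν.vir j = x) := by
    intro x
    simp [hsV, Finset.mem_union, Finset.mem_image]
  have hsubO : ∀ x ∈ sO, (x : ℕ) < N := by
    intro x hx
    rcases (hmemO x).mp hx with ⟨j, rfl⟩ | ⟨j, rfl⟩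
    exacts [μ.occ_lt j, ν.occ_lt j]
  have hsubV : ∀ x ∈ sV, N ≤ (x : ℕ) := by
    intro x hx
    rcases (hmemV x).mp hx with ⟨j, rfl⟩ | ⟨j, rfl⟩
    exacts [μ.vir_ge j, ν.vir_ge j]
  have hrle : μ.r + ν.r ≤ N := by
    rw [← hcardO, ← card_filter_lt hNK]
    exact Finset.card_le_card fun x hx =>
      Finset.mem_filter.mpr ⟨Finset.mem_univ x, hsubO x hx⟩
  refine ⟨⟨μ.r + ν.r, le_trans μ.r_pos (Nat.le_add_right _ _), hrle,
    sO.orderEmbOfFin hcardO, sV.orderEmbOfFin hcardV,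
    (sO.orderEmbOfFin hcardO).strictMono, (sV.orderEmbOfFin hcardV).strictMono,
    fun j => hsubO _ (Finset.orderEmbOfFin_mem sO hcardO j),
    fun j => hsubV _ (Finset.orderEmbOfFin_mem sV hcardV j)⟩, rfl, ?_⟩
  set lam : ExIdx K N := ⟨μ.r + ν.r, le_trans μ.r_pos (Nat.le_add_right _ _), hrle,
    sO.orderEmbOfFin hcardO, sV.orderEmbOfFin hcardV,
    (sO.orderEmbOfFin hcardO).strictMono, (sV.orderEmbOfFin hcardV).strictMono,
    fun j => hsubO _ (Finset.orderEmbOfFin_mem sO hcardO j),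
    fun j => hsubV _ (Finset.orderEmbOfFin_mem sV hcardV j)⟩ with hlam
  have hlamO : ∀ x, (∃ j, lam.occ j = x) ↔ x ∈ sO := by
    intro x
    constructor
    · rintro ⟨j, rfl⟩; exact Finset.orderEmbOfFin_mem sO hcardO j
    · intro hx
      have : x ∈ Set.range (sO.orderEmbOfFin hcardO) := by
        rw [Finset.range_orderEmbOfFin]; exact hx
      obtain ⟨j, hj⟩ := this
      exact ⟨j, hj⟩
  have hlamV : ∀ x, (∃ j, lam.vir j = x) ↔ x ∈ sV := by
    intro x
    constructor
    · rintro ⟨j, rfl⟩; exact Finset.orderEmbOfFin_mem sV hcardV j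
    · intro hx
      have : x ∈ Set.range (sV.orderEmbOfFin hcardV) := by
        rw [Finset.range_orderEmbOfFin]; exact hx
      obtain ⟨j, hj⟩ := this
      exact ⟨j, hj⟩
  have hperm : (opsOf μ ++ opsOf ν).Perm (opsOf lam) := by
    apply List.perm_of_nodup_nodup_toFinset_eq
    · exact (nodup_fst_append μ ν hdo hdv).of_map
    · exact (nodup_fst_opsOf lam).of_map
    · ext p
      simp only [List.toFinset_append, Finset.mem_union, List.mem_toFinset, List.mem_append,
        mem_opsOf]
      constructor
      · rintro ((⟨hb, ⟨j, hj⟩⟩ | ⟨hb, ⟨j, hj⟩⟩) | (⟨hb, ⟨j, hj⟩⟩ | ⟨hb, ⟨j, hj⟩⟩))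
        · exact Or.inl ⟨hb, (hlamV p.1).mpr ((hmemV p.1).mpr (Or.inl ⟨j, hj⟩))⟩
        · exact Or.inr ⟨hb, (hlamO p.1).mpr ((hmemO p.1).mpr (Or.inl ⟨j, hj⟩))⟩
        · exact Or.inl ⟨hb, (hlamV p.1).mpr ((hmemV p.1).mpr (Or.inr ⟨j, hj⟩))⟩
        · exact Or.inr ⟨hb, (hlamO p.1).mpr ((hmemO p.1).mpr (Or.inr ⟨j, hj⟩))⟩
      · rintro (⟨hb, hj⟩ | ⟨hb, hj⟩)
        · rcases (hmemV p.1).mp ((hlamV p.1).mp hj) with h | h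
          · exact Or.inl (Or.inl ⟨hb, h⟩)
          · exact Or.inr (Or.inl ⟨hb, h⟩)
        · rcases (hmemO p.1).mp ((hlamO p.1).mp hj) with h | h
          · exact Or.inl (Or.inr ⟨hb, h⟩)
          · exact Or.inr (Or.inr ⟨hb, h⟩)
  obtain ⟨ε, hε, he⟩ := prodOps_perm hperm (nodup_fst_append μ ν hdo hdv)
  exact ⟨ε, hε, by rw [excOp_mul_eq, he, excOp_eq_prodOps]⟩

lemma mem_occ_iff_cfg (c : ExIdx K N) (x : Fin K) :
    (∃ j, c.occ j = x) ↔ ((x : ℕ) < N ∧ cfgOf c (refOcc K N) x = false) := by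
  constructor
  · rintro ⟨j, rfl⟩
    refine ⟨c.occ_lt j, ?_⟩
    have h1 : c.occ j ∉ List.ofFn c.vir := by
      rw [List.mem_ofFn]; rintro ⟨j', hj'⟩; exact occ_ne_vir c c j j' hj'.symm
    have h2 : c.occ j ∈ List.ofFn c.occ := by rw [List.mem_ofFn]; exact ⟨j, rfl⟩
    simp [cfgOf, maskT, maskF, h1, h2]
  · rintro ⟨hlt, hc⟩
    have h1 : x ∉ List.ofFn c.vir := by
      rw [List.mem_ofFn]; rintro ⟨j, rfl⟩; exact absurd hlt (not_lt.mpr (c.vir_ge j))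
    by_contra hne
    have h2 : x ∉ List.ofFn c.occ := by rw [List.mem_ofFn]; exact hne
    simp [cfgOf, maskT, maskF, h1, h2, refOcc, hlt] at hc

lemma mem_vir_iff_cfg (c : ExIdx K N) (x : Fin K) :
    (∃ j, c.vir j = x) ↔ (N ≤ (x : ℕ) ∧ cfgOf c (refOcc K N) x = true) := by
  constructor
  · rintro ⟨j, rfl⟩
    refine ⟨c.vir_ge j, ?_⟩
    have h2 : c.vir j ∈ List.ofFn c.vir := by rw [List.mem_ofFn]; exact ⟨j, rfl⟩
    simp [cfgOf, maskT, h2]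
  · rintro ⟨hge, hc⟩
    by_contra hne
    have h1 : x ∉ List.ofFn c.vir := by rw [List.mem_ofFn]; exact hne
    have h2 : x ∉ List.ofFn c.occ := by
      rw [List.mem_ofFn]; rintro ⟨j, rfl⟩; exact absurd (c.occ_lt j) (not_lt.mpr hge)
    simp [cfgOf, maskT, maskF, h1, h2, refOcc, not_lt.mpr hge] at hc

lemma ExIdx_ext (a b : ExIdx K N) (hr : a.r = b.r)
    (ho : ∀ x, (∃ j, a.occ j = x) ↔ (∃ j, b.occ j = x))
    (hv : ∀ x, (∃ j, a.vir j = x) ↔ (∃ j, b.vir j = x)) : a = b := by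
  obtain ⟨ra, pa, la, oa, va, oma, vma, olta, vgea⟩ := a
  obtain ⟨rb, pb, lb, ob, vb, omb, vmb, oltb, vgeb⟩ := b
  dsimp at hr ho hv
  subst hr
  have ho' : oa = ob :=
    (oma.range_inj omb).mp (Set.ext fun x => by simpa [Set.mem_range] using ho x)
  have hv' : va = vb :=
    (vma.range_inj vmb).mp (Set.ext fun x => by simpa [Set.mem_range] using hv x)
  subst ho'; subst hv'
  rfl

lemma cfg_det (a b : ExIdx K N) (hr : a.r = b.r)
    (h : cfgOf a (refOcc K N) = cfgOf b (refOcc K N)) : a = b := by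
  apply ExIdx_ext a b hr
  · intro x; rw [mem_occ_iff_cfg, mem_occ_iff_cfg, h]
  · intro x; rw [mem_vir_iff_cfg, mem_vir_iff_cfg, h]

lemma resL_apply_val (hX : ExcInvariant K N) (σ : ExIdx K N) (y : Hspace K N) :
    ((excResL K N hX σ y : FockSpace K)) = excOp K N σ (y : FockSpace K) := by
  simp [excResL]

lemma resL_mul_apply (hX : ExcInvariant K N) (μ ν : ExIdx K N) (x : Hspace K N) :
    (((excResL K N hX μ * excResL K N hX ν) x : FockSpace K))
      = excOp K N μ (excOp K N ν (x : FockSpace K)) := by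
  rw [ContinuousLinearMap.mul_apply, resL_apply_val, resL_apply_val]

lemma resL_zero (hX : ExcInvariant K N) (μ ν : ExIdx K N)
    (h : excOp K N μ * excOp K N ν = 0) :
    excResL K N hX μ * excResL K N hX ν = 0 := by
  refine ContinuousLinearMap.ext fun x => Subtype.ext ?_
  have hx := LinearMap.congr_fun h (x : FockSpace K)
  rw [Module.End.mul_apply, LinearMap.zero_apply] at hx
  rw [resL_mul_apply, hx]
  simp

lemma resL_smul (hX : ExcInvariant K N) (μ ν lam : ExIdx K N) (ε : ℝ)
    (h : excOp K N μ * excOp K N ν = ε • excOp K N lam) :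
    excResL K N hX μ * excResL K N hX ν = ε • excResL K N hX lam := by
  refine ContinuousLinearMap.ext fun x => Subtype.ext ?_
  have hx := LinearMap.congr_fun h (x : FockSpace K)
  rw [Module.End.mul_apply, LinearMap.smul_apply] at hx
  rw [resL_mul_apply, hx, ContinuousLinearMap.smul_apply]
  simp [resL_apply_val]

lemma comp_zero_occ (μ ν : ExIdx K N) (j : Fin μ.r) (j' : Fin ν.r)
    (h : ν.occ j' = μ.occ j) : excOp K N μ * excOp K N ν = 0 := by
  apply op_eq_of_eVec
  intro k
  rw [Module.End.mul_apply, LinearMap.zero_apply]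
  obtain ⟨c, hc, hiff⟩ := excOp_eVec ν k
  obtain ⟨c', hc', hiff'⟩ := excOp_eVec μ (cfgOf ν k)
  rw [hc, map_smul, hc']
  suffices hc'0 : c' = 0 by rw [hc'0]; simp
  by_contra hne
  obtain ⟨h1, _⟩ := hiff'.mp hne
  have hmem : μ.occ j ∈ List.ofFn ν.occ := by rw [List.mem_ofFn]; exact ⟨j', h⟩
  have hnot : μ.occ j ∉ List.ofFn ν.vir := by
    rw [List.mem_ofFn]; rintro ⟨j'', hj''⟩; exact occ_ne_vir μ ν j j'' hj''.symm
  have hfalse : cfgOf ν k (μ.occ j) = false := by simp [cfgOf, maskT, maskF, hnot, hmem]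
  rw [h1 j] at hfalse
  simp at hfalse

lemma comp_zero_vir (μ ν : ExIdx K N) (j : Fin μ.r) (j' : Fin ν.r)
    (h : ν.vir j' = μ.vir j) : excOp K N μ * excOp K N ν = 0 := by
  apply op_eq_of_eVec
  intro k
  rw [Module.End.mul_apply, LinearMap.zero_apply]
  obtain ⟨c, hc, hiff⟩ := excOp_eVec ν k
  obtain ⟨c', hc', hiff'⟩ := excOp_eVec μ (cfgOf ν k)
  rw [hc, map_smul, hc']
  suffices hc'0 : c' = 0 by rw [hc'0]; simp
  by_contra hne
  obtain ⟨_, h2⟩ := hiff'.mp hne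
  have hmem : μ.vir j ∈ List.ofFn ν.vir := by rw [List.mem_ofFn]; exact ⟨j', h⟩
  have htrue : cfgOf ν k (μ.vir j) = true := by simp [cfgOf, maskT, hmem]
  rw [h2 j] at htrue
  simp at htrue

/-- the restriction to the N-particle space of a composition of two
excitation operators is either zero or (up to sign) a unique excitation operator of
rank `|μ| + |ν|`; in particular the cluster space is closed under composition. -/
theorem excitation_composition
    (K N : ℕ) (hN : 0 < N) (hK : N < K) (hX : ExcInvariant K N) (μ ν : ExIdx K N) :
    (excResL K N hX μ * excResL K N hX ν = 0 ∨
      ((μ.r + ν.r ≤ N ∧ Disjoint (Set.range μ.occ) (Set.range ν.occ) ∧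
          Disjoint (Set.range μ.vir) (Set.range ν.vir)) ∧
        ∃! lam : ExIdx K N, lam.r = μ.r + ν.r ∧ ∃ ε : ℝ, (ε = 1 ∨ ε = -1) ∧
          excResL K N hX μ * excResL K N hX ν = ε • excResL K N hX lam)) ∧
    ∀ S ∈ clusterSpace K N hX, ∀ T ∈ clusterSpace K N hX,
      S * T ∈ clusterSpace K N hX := by
  have hmain : ∀ μ ν : ExIdx K N,
      excResL K N hX μ * excResL K N hX ν = 0 ∨
      ((μ.r + ν.r ≤ N ∧ Disjoint (Set.range μ.occ) (Set.range ν.occ) ∧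
          Disjoint (Set.range μ.vir) (Set.range ν.vir)) ∧
        ∃! lam : ExIdx K N, lam.r = μ.r + ν.r ∧ ∃ ε : ℝ, (ε = 1 ∨ ε = -1) ∧
          excResL K N hX μ * excResL K N hX ν = ε • excResL K N hX lam) := by
    intro μ ν
    by_cases hdo : Disjoint (Set.range μ.occ) (Set.range ν.occ)
    · by_cases hdv : Disjoint (Set.range μ.vir) (Set.range ν.vir)
      · right
        obtain ⟨lam, hr, ε, hε, he⟩ := exists_lam hK.le μ ν hdo hdv
        have heCLM := resL_smul hX μ ν lam ε he
        refine ⟨⟨hr ▸ lam.r_le, hdo, hdv⟩, lam, ⟨hr, ε, hε, heCLM⟩, ?_⟩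
        rintro lam' ⟨hr', ε', hε', he'⟩
        -- uniqueness
        have hcomb : ε' • excResL K N hX lam' = ε • excResL K N hX lam :=
          he'.symm.trans heCLM
        have h0 := congrArg
          (fun T : Hspace K N →L[ℝ] Hspace K N =>
            ((T (refState K N hK.le)) : FockSpace K)) hcomb
        rw [ContinuousLinearMap.smul_apply, ContinuousLinearMap.smul_apply] at h0
        have hval : ε' • excOp K N lam' (refVec K N) = ε • excOp K N lam (refVec K N) := by
          simpa [resL_apply_val, refState] using h0
        obtain ⟨c1, hc1, hi1⟩ := excOp_eVec lam' (refOcc K N)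
        obtain ⟨c2, hc2, hi2⟩ := excOp_eVec lam (refOcc K N)
        have hc1ne : c1 ≠ 0 := hi1.mpr
          ⟨fun j => by simp [refOcc, lam'.occ_lt j],
           fun j => by simp [refOcc, not_lt.mpr (lam'.vir_ge j)]⟩
        have hc2ne : c2 ≠ 0 := hi2.mpr
          ⟨fun j => by simp [refOcc, lam.occ_lt j],
           fun j => by simp [refOcc, not_lt.mpr (lam.vir_ge j)]⟩
        have hε'ne : ε' ≠ 0 := by rcases hε' with rfl | rfl <;> norm_num
        have hval' : (ε' * c1) • eVec K (cfgOf lam' (refOcc K N))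
            = (ε * c2) • eVec K (cfgOf lam (refOcc K N)) := by
          have : refVec K N = eVec K (refOcc K N) := rfl
          rw [this] at hval
          rw [← smul_smul, ← smul_smul, ← hc1, ← hc2]
          exact hval
        have hcfg : cfgOf lam' (refOcc K N) = cfgOf lam (refOcc K N) := by
          by_contra hne
          have hev := congrFun hval' (cfgOf lam' (refOcc K N))
          simp [eVec, Pi.single_apply, hne] at hev
          exact hev.elim hε'ne hc1ne
        exact cfg_det lam' lam (hr'.trans hr.symm) hcfg
      · left
        rw [Set.not_disjoint_iff] at hdv
        obtain ⟨x, ⟨j, hj⟩, ⟨j', hj'⟩⟩ := hdv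
        exact resL_zero hX μ ν (comp_zero_vir μ ν j j' (hj'.trans hj.symm))
    · left
      rw [Set.not_disjoint_iff] at hdo
      obtain ⟨x, ⟨j, hj⟩, ⟨j', hj'⟩⟩ := hdo
      exact resL_zero hX μ ν (comp_zero_occ μ ν j j' (hj'.trans hj.symm))
  refine ⟨hmain μ ν, ?_⟩
  have hmul_add : ∀ A B C : Hspace K N →L[ℝ] Hspace K N, A * (B + C) = A * B + A * C := by
    intro A B C; ext x
    simp [ContinuousLinearMap.mul_apply]
  have hadd_mul : ∀ A B C : Hspace K N →L[ℝ] Hspace K N, (A + B) * C = A * C + B * C := by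
    intro A B C; ext x
    simp [ContinuousLinearMap.mul_apply]
  have hmul_zero : ∀ A : Hspace K N →L[ℝ] Hspace K N, A * 0 = 0 := by
    intro A; ext x
    simp [ContinuousLinearMap.mul_apply]
  have hzero_mul : ∀ A : Hspace K N →L[ℝ] Hspace K N, 0 * A = 0 := by
    intro A; ext x
    simp [ContinuousLinearMap.mul_apply]
  have hmul_smul : ∀ (a : ℝ) (A B : Hspace K N →L[ℝ] Hspace K N),
      A * (a • B) = a • (A * B) := by
    intro a A B; ext x
    simp [ContinuousLinearMap.mul_apply]
  have hsmul_mul : ∀ (a : ℝ) (A B : Hspace K N →L[ℝ] Hspace K N),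
      (a • A) * B = a • (A * B) := by
    intro a A B; ext x
    simp [ContinuousLinearMap.mul_apply]
  have hgen : ∀ (μ' : ExIdx K N), ∀ T ∈ clusterSpace K N hX,
      excResL K N hX μ' * T ∈ clusterSpace K N hX := by
    intro μ' T hT
    induction hT using Submodule.span_induction with
    | mem x hx =>
        obtain ⟨ν', rfl⟩ := hx
        rcases hmain μ' ν' with h0 | ⟨-, lam, ⟨-, ε, -, he⟩, -⟩
        · rw [h0]; exact Submodule.zero_mem _
        · rw [he]
          exact Submodule.smul_mem _ _ (Submodule.subset_span ⟨lam, rfl⟩)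
    | zero => rw [hmul_zero]; exact Submodule.zero_mem _
    | add x y hx hy ihx ihy => rw [hmul_add]; exact Submodule.add_mem _ ihx ihy
    | smul a x hx ih => rw [hmul_smul]; exact Submodule.smul_mem _ _ ih
  intro S hS T hT
  induction hS using Submodule.span_induction with
  | mem x hx =>
      obtain ⟨μ', rfl⟩ := hx
      exact hgen μ' T hT
  | zero => rw [hzero_mul]; exact Submodule.zero_mem _
  | add x y hx hy ihx ihy => rw [hadd_mul]; exact Submodule.add_mem _ ihx ihy
  | smul a x hx ih => rw [hsmul_mul]; exact Submodule.smul_mem _ _ ih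


end CC
end

section
/- The space of cluster operators 𝔟 ⊆ End(ℋ), equipped with the commutator bracket [S, T] = S ∘ T − T ∘ S, is an Abelian Lie algebra: 𝔟 is a linear subspace and for all S, T ∈ 𝔟 one has [S, T] = 0 (in particular 𝔟 is closed under the bracket). -/
set_option synthInstance.maxHeartbeats 1000000
set_option maxHeartbeats 1000000

namespace CC

section Aux

lemma sgn_update_not_lt {K : ℕ} (i j : Fin K) (m : Fin K → Bool) (b : Bool) (h : ¬ j < i) :
    sgn K i (Function.update m j b) = sgn K i m := by
  unfold sgn
  congr 2
  apply Finset.filter_congr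
  intro x _
  by_cases hx : x = j
  · subst hx
    constructor <;> (rintro ⟨h1, -⟩; exact absurd h1 h)
  · simp [Function.update_of_ne hx]

lemma sgn_update_flip {K : ℕ} (i j : Fin K) (m : Fin K → Bool) (b : Bool)
    (h : j < i) (hb : m j ≠ b) :
    sgn K i (Function.update m j b) = - sgn K i m := by
  unfold sgn
  cases b with
  | true =>
    have hmj : m j = false := by simpa using hb
    have hset : (Finset.univ.filter fun x => x < i ∧ (Function.update m j true) x = true)
        = insert j (Finset.univ.filter fun x => x < i ∧ m x = true) := by
      ext x
      by_cases hx : x = j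
      · subst hx; simp [h, hmj]
      · simp [Function.update_of_ne hx, hx]
    have hj : j ∉ (Finset.univ.filter fun x => x < i ∧ m x = true) := by simp [hmj]
    rw [hset, Finset.card_insert_of_notMem hj, pow_succ]
    ring
  | false =>
    have hmj : m j = true := by simpa using hb
    have hset : (Finset.univ.filter fun x => x < i ∧ m x = true)
        = insert j (Finset.univ.filter fun x => x < i ∧ (Function.update m j false) x = true) := by
      ext x
      by_cases hx : x = j
      · subst hx; simp [h, hmj]
      · simp [Function.update_of_ne hx, hx]
    have hj : j ∉ (Finset.univ.filter fun x => x < i ∧ (Function.update m j false) x = true) := by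
      simp
    rw [hset, Finset.card_insert_of_notMem hj, pow_succ]
    ring

lemma cre_mul_cre (K : ℕ) (i j : Fin K) :
    creOp K i * creOp K j = -(creOp K j * creOp K i) := by
  apply LinearMap.ext; intro f
  funext m
  simp only [Module.End.mul_apply, LinearMap.neg_apply, Pi.neg_apply, creOp,
    LinearMap.coe_mk, AddHom.coe_mk]
  rcases eq_or_ne i j with rfl | hij
  · by_cases hi : m i = true <;> simp [hi]
  · by_cases hi : m i = true <;> by_cases hj : m j = true <;>
      simp only [hi, hj, Function.update_of_ne hij, Function.update_of_ne hij.symm,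
        if_true, if_false, Bool.false_eq_true, ite_false, neg_zero, mul_zero]
    rw [sgn_update_not_lt i i _ _ (lt_irrefl i), sgn_update_not_lt j j _ _ (lt_irrefl j),
      sgn_update_not_lt i i _ _ (lt_irrefl i), sgn_update_not_lt j j _ _ (lt_irrefl j),
      Function.update_comm hij.symm]
    rcases hij.lt_or_gt with h | h
    · rw [sgn_update_flip j i m false h (by simp [hi]),
        sgn_update_not_lt i j m false (not_lt.2 h.le)]
      ring
    · rw [sgn_update_flip i j m false h (by simp [hj]),
        sgn_update_not_lt j i m false (not_lt.2 h.le)]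
      ring

lemma ann_mul_ann (K : ℕ) (i j : Fin K) :
    annOp K i * annOp K j = -(annOp K j * annOp K i) := by
  apply LinearMap.ext; intro f
  funext m
  simp only [Module.End.mul_apply, LinearMap.neg_apply, Pi.neg_apply, annOp,
    LinearMap.coe_mk, AddHom.coe_mk]
  rcases eq_or_ne i j with rfl | hij
  · by_cases hi : m i = true <;> simp [hi]
  · by_cases hi : m i = true <;> by_cases hj : m j = true <;>
      simp only [hi, hj, Function.update_of_ne hij, Function.update_of_ne hij.symm,
        if_true, if_false, Bool.false_eq_true, ite_false, neg_zero, mul_zero, zero_mul]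
    rw [Function.update_comm hij.symm]
    rcases hij.lt_or_gt with h | h
    · rw [sgn_update_flip j i m true h (by simp [hi]),
        sgn_update_not_lt i j m true (not_lt.2 h.le)]
      ring
    · rw [sgn_update_flip i j m true h (by simp [hj]),
        sgn_update_not_lt j i m true (not_lt.2 h.le)]
      ring

lemma cre_mul_ann (K : ℕ) (i j : Fin K) (hij : i ≠ j) :
    creOp K i * annOp K j = -(annOp K j * creOp K i) := by
  apply LinearMap.ext; intro f
  funext m
  simp only [Module.End.mul_apply, LinearMap.neg_apply, Pi.neg_apply, annOp, creOp,
    LinearMap.coe_mk, AddHom.coe_mk]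
  by_cases hi : m i = true <;> by_cases hj : m j = true <;>
    simp only [hi, hj, Function.update_of_ne hij, Function.update_of_ne hij.symm,
      if_true, if_false, Bool.false_eq_true, ite_false, ite_true, neg_zero, mul_zero, zero_mul]
  rw [sgn_update_not_lt i i m false (lt_irrefl i),
    sgn_update_not_lt i i (Function.update m j true) false (lt_irrefl i),
    Function.update_comm hij]
  rcases hij.lt_or_gt with h | h
  · rw [sgn_update_flip j i m false h (by simp [hi]),
      sgn_update_not_lt i j m true (not_lt.2 h.le)]
    ring
  · rw [sgn_update_not_lt j i m false (not_lt.2 h.le),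
      sgn_update_flip i j m true h (by simp [hj])]
    ring

lemma list_anticomm {R : Type*} [Ring R] (x : R) (l : List R)
    (h : ∀ a ∈ l, x * a = -(a * x)) :
    x * l.prod = (-1 : R) ^ l.length * (l.prod * x) := by
  induction l with
  | nil => simp
  | cons a l ih =>
    have ha := h a (List.mem_cons_self)
    have ih' := ih (fun b hb => h b (List.mem_cons_of_mem a hb))
    rw [List.prod_cons, List.length_cons, ← mul_assoc, ha, neg_mul, mul_assoc, ih', pow_succ]
    rcases Nat.even_or_odd l.length with he | ho
    · simp [he.neg_one_pow, mul_assoc]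
    · simp [ho.neg_one_pow, mul_assoc]

lemma prods_comm {R : Type*} [Ring R] (l1 l2 : List R)
    (h : ∀ x ∈ l1, x * l2.prod = l2.prod * x) :
    l1.prod * l2.prod = l2.prod * l1.prod := by
  induction l1 with
  | nil => simp
  | cons a l1 ih =>
    rw [List.prod_cons, mul_assoc, ih (fun b hb => h b (List.mem_cons_of_mem a hb)),
      ← mul_assoc, h a (List.mem_cons_self), mul_assoc]

noncomputable def opList (K N : ℕ) (μ : ExIdx K N) : List (Module.End ℝ (FockSpace K)) :=
  (List.ofFn fun j => creOp K (μ.vir j)) ++ (List.ofFn fun j => annOp K (μ.occ j)).reverse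

lemma excOp_eq_prod (K N : ℕ) (μ : ExIdx K N) : excOp K N μ = (opList K N μ).prod := by
  rw [opList, List.prod_append, excOp]

lemma opList_length (K N : ℕ) (μ : ExIdx K N) : (opList K N μ).length = 2 * μ.r := by
  simp [opList]; ring

lemma mem_opList (K N : ℕ) (μ : ExIdx K N) (x : Module.End ℝ (FockSpace K))
    (hx : x ∈ opList K N μ) :
    (∃ a : Fin K, N ≤ (a : ℕ) ∧ x = creOp K a) ∨
      (∃ i : Fin K, (i : ℕ) < N ∧ x = annOp K i) := by
  rw [opList, List.mem_append, List.mem_reverse, List.mem_ofFn, List.mem_ofFn] at hx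
  rcases hx with ⟨j, hj⟩ | ⟨j, hj⟩
  · exact Or.inl ⟨μ.vir j, μ.vir_ge j, hj.symm⟩
  · exact Or.inr ⟨μ.occ j, μ.occ_lt j, hj.symm⟩

lemma opList_anticomm (K N : ℕ) (μ ν : ExIdx K N)
    (x : Module.End ℝ (FockSpace K)) (hx : x ∈ opList K N μ)
    (y : Module.End ℝ (FockSpace K)) (hy : y ∈ opList K N ν) :
    x * y = -(y * x) := by
  rcases mem_opList K N μ x hx with ⟨a, ha, rfl⟩ | ⟨i, hi, rfl⟩ <;>
    rcases mem_opList K N ν y hy with ⟨b, hb, rfl⟩ | ⟨j, hj, rfl⟩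
  · exact cre_mul_cre K a b
  · exact cre_mul_ann K a j (fun h => absurd (h ▸ ha) (not_le.2 hj))
  · have := cre_mul_ann K b i (fun h => absurd (h ▸ hb) (not_le.2 hi))
    rw [this, neg_neg]
  · exact ann_mul_ann K i j

lemma excOp_comm (K N : ℕ) (μ ν : ExIdx K N) :
    excOp K N μ * excOp K N ν = excOp K N ν * excOp K N μ := by
  rw [excOp_eq_prod, excOp_eq_prod]
  apply prods_comm
  intro x hx
  rw [list_anticomm x (opList K N ν) (fun y hy => opList_anticomm K N μ ν x hx y hy),
    opList_length]
  have h2 : ((-1 : Module.End ℝ (FockSpace K)) ^ (2 : ℕ)) = 1 := by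
    rw [sq]
    apply LinearMap.ext
    intro f
    simp [Module.End.mul_apply]
  rw [pow_mul, h2, one_pow, one_mul]

lemma excResL_comm (K N : ℕ) (hX : ExcInvariant K N) (μ ν : ExIdx K N) :
    excResL K N hX μ * excResL K N hX ν = excResL K N hX ν * excResL K N hX μ := by
  apply ContinuousLinearMap.ext
  intro x
  apply Subtype.ext
  have h := DFunLike.congr_fun (excOp_comm K N μ ν) (x : FockSpace K)
  simp only [Module.End.mul_apply] at h
  simpa [excResL, LinearMap.restrict_apply, ContinuousLinearMap.mul_apply] using h

end Aux

/-- the space of cluster operators with the commutator bracket is an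
Abelian Lie algebra: all brackets vanish (and in particular lie in the space). -/
theorem cluster_space_abelian_lie_algebra
    (K N : ℕ) (hN : 0 < N) (hK : N < K) (hX : ExcInvariant K N) :
    ∀ S ∈ clusterSpace K N hX, ∀ T ∈ clusterSpace K N hX,
      S * T - T * S = 0 ∧ S * T - T * S ∈ clusterSpace K N hX := by
  have key : ∀ S ∈ clusterSpace K N hX, ∀ ν : ExIdx K N,
      S * excResL K N hX ν = excResL K N hX ν * S := by
    intro S hS ν
    induction hS using Submodule.span_induction with
    | mem x hx =>
      obtain ⟨μ, rfl⟩ := hx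
      exact excResL_comm K N hX μ ν
    | zero =>
      apply ContinuousLinearMap.ext
      intro v
      simp [ContinuousLinearMap.mul_apply]
    | add x y _ _ hx hy =>
      apply ContinuousLinearMap.ext
      intro v
      have hxv := DFunLike.congr_fun hx v
      have hyv := DFunLike.congr_fun hy v
      simp only [ContinuousLinearMap.mul_apply, ContinuousLinearMap.add_apply, map_add] at *
      rw [hxv, hyv]
    | smul c x _ hx =>
      apply ContinuousLinearMap.ext
      intro v
      have hxv := DFunLike.congr_fun hx v
      simp only [ContinuousLinearMap.mul_apply, ContinuousLinearMap.smul_apply, map_smul] at *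
      rw [hxv]
  intro S hS T hT
  have hcomm : S * T = T * S := by
    induction hT using Submodule.span_induction with
    | mem x hx =>
      obtain ⟨ν, rfl⟩ := hx
      exact key S hS ν
    | zero =>
      apply ContinuousLinearMap.ext
      intro v
      simp [ContinuousLinearMap.mul_apply]
    | add x y _ _ hx hy =>
      apply ContinuousLinearMap.ext
      intro v
      have hxv := DFunLike.congr_fun hx v
      have hyv := DFunLike.congr_fun hy v
      simp only [ContinuousLinearMap.mul_apply, ContinuousLinearMap.add_apply, map_add] at *
      rw [hxv, hyv]
    | smul c x _ hx =>
      apply ContinuousLinearMap.ext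
      intro v
      have hxv := DFunLike.congr_fun hx v
      simp only [ContinuousLinearMap.mul_apply, ContinuousLinearMap.smul_apply, map_smul] at *
      rw [hxv]
  have h0 : S * T - T * S = 0 := by
    apply ContinuousLinearMap.ext
    intro v
    have h := DFunLike.congr_fun hcomm v
    simp only [ContinuousLinearMap.sub_apply, ContinuousLinearMap.zero_apply, h, sub_self]
  exact ⟨h0, h0 ▸ Submodule.zero_mem _⟩


end CC
end

section
/- Every cluster operator is nilpotent of order at most N + 1: for every T ∈ 𝔟 one has T^{N+1} = 0 as an endomorphism of the N-particle space ℋ. Consequently, for every T ∈ 𝔟 the operator exponential exp(T) equals the finite sum ∑_{n=0}^{N} T^n / n!. -/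
set_option synthInstance.maxHeartbeats 1000000
set_option maxHeartbeats 1000000

namespace CC

def vCount (K N : ℕ) (m : Fin K → Bool) : ℕ :=
  (Finset.univ.filter fun j : Fin K => N ≤ (j : ℕ) ∧ m j = true).card

def Fd (K N d : ℕ) : Submodule ℝ (FockSpace K) where
  carrier := {f | ∀ m, vCount K N m < d → f m = 0}
  add_mem' := fun hf hg m hm => by
    show _ + _ = (0:ℝ)
    rw [hf m hm, hg m hm, add_zero]
  zero_mem' := fun m hm => rfl
  smul_mem' := fun c f hf m hm => by
    show c * _ = (0:ℝ)
    rw [hf m hm, mul_zero]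

lemma Fd_mono (K N : ℕ) {d e : ℕ} (h : d ≤ e) : Fd K N e ≤ Fd K N d :=
  fun _ hf m hm => hf m (lt_of_lt_of_le hm h)

lemma vCount_update_occ (K N : ℕ) (i : Fin K) (hi : (i : ℕ) < N) (m : Fin K → Bool) (b : Bool) :
    vCount K N (Function.update m i b) = vCount K N m := by
  unfold vCount
  congr 1
  ext j
  simp only [Finset.mem_filter, Finset.mem_univ, true_and]
  by_cases hj : j = i
  · subst hj; omega
  · rw [Function.update_of_ne hj]

lemma vCount_update_vir (K N : ℕ) (i : Fin K) (hi : N ≤ (i : ℕ)) (m : Fin K → Bool)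
    (hm : m i = true) :
    vCount K N (Function.update m i false) + 1 = vCount K N m := by
  unfold vCount
  have hins : (Finset.univ.filter fun j : Fin K => N ≤ (j : ℕ) ∧ m j = true)
      = insert i (Finset.univ.filter fun j : Fin K =>
          N ≤ (j : ℕ) ∧ Function.update m i false j = true) := by
    ext j
    simp only [Finset.mem_insert, Finset.mem_filter, Finset.mem_univ, true_and]
    by_cases hj : j = i
    · subst hj; simp [hm, hi]
    · rw [Function.update_of_ne hj]; tauto
  rw [hins, Finset.card_insert_of_notMem (by simp)]

lemma annOp_mem_Fd (K N : ℕ) (i : Fin K) (hi : (i : ℕ) < N) (d : ℕ) (f : FockSpace K)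
    (hf : f ∈ Fd K N d) : annOp K i f ∈ Fd K N d := by
  intro m hm
  show (if m i = true then 0 else sgn K i m * f (Function.update m i true)) = 0
  split
  · rfl
  · rw [hf _ (by rwa [vCount_update_occ K N i hi]), mul_zero]

lemma creOp_mem_Fd (K N : ℕ) (i : Fin K) (hi : N ≤ (i : ℕ)) (d : ℕ) (f : FockSpace K)
    (hf : f ∈ Fd K N d) : creOp K i f ∈ Fd K N (d + 1) := by
  intro m hm
  show (if m i = true then
      sgn K i (Function.update m i false) * f (Function.update m i false) else 0) = 0
  split
  · rename_i h
    rw [hf _ (by have := vCount_update_vir K N i hi m h; omega), mul_zero]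
  · rfl

lemma list_prod_preserve (K N : ℕ) (L : List (Module.End ℝ (FockSpace K)))
    (hL : ∀ g ∈ L, ∀ d f, f ∈ Fd K N d → g f ∈ Fd K N d) :
    ∀ d f, f ∈ Fd K N d → L.prod f ∈ Fd K N d := by
  induction L with
  | nil => intro d f hf; simpa using hf
  | cons a L ih =>
    intro d f hf
    have : (a :: L).prod f = a (L.prod f) := by simp [List.prod_cons]
    rw [this]
    exact hL a (by simp) d _ (ih (fun g hg => hL g (by simp [hg])) d f hf)

lemma list_prod_raise (K N : ℕ) (L : List (Module.End ℝ (FockSpace K)))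
    (hL : ∀ g ∈ L, ∀ d f, f ∈ Fd K N d → g f ∈ Fd K N (d + 1)) :
    ∀ d f, f ∈ Fd K N d → L.prod f ∈ Fd K N (d + L.length) := by
  induction L with
  | nil => intro d f hf; simpa using hf
  | cons a L ih =>
    intro d f hf
    have h1 : (a :: L).prod f = a (L.prod f) := by simp [List.prod_cons]
    rw [h1]
    have h2 := hL a (by simp) (d + L.length) _ (ih (fun g hg => hL g (by simp [hg])) d f hf)
    have : d + L.length + 1 = d + (a :: L).length := by simp; omega
    rwa [this] at h2

lemma excOp_raise (K N : ℕ) (μ : ExIdx K N) (d : ℕ) (f : FockSpace K)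
    (hf : f ∈ Fd K N d) : excOp K N μ f ∈ Fd K N (d + 1) := by
  have hx : excOp K N μ f
      = (List.ofFn fun j => creOp K (μ.vir j)).prod
          (((List.ofFn fun j => annOp K (μ.occ j)).reverse).prod f) := rfl
  rw [hx]
  have hann : ((List.ofFn fun j => annOp K (μ.occ j)).reverse).prod f ∈ Fd K N d := by
    refine list_prod_preserve K N _ ?_ d f hf
    intro g hg d' f' hf'
    rw [List.mem_reverse, List.mem_ofFn] at hg
    obtain ⟨j, rfl⟩ := hg
    exact annOp_mem_Fd K N _ (μ.occ_lt j) d' f' hf'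
  have hcre := list_prod_raise K N (List.ofFn fun j => creOp K (μ.vir j)) (by
    intro g hg d' f' hf'
    rw [List.mem_ofFn] at hg
    obtain ⟨j, rfl⟩ := hg
    exact creOp_mem_Fd K N _ (μ.vir_ge j) d' f' hf') d _ hann
  have hlen : (List.ofFn fun j => creOp K (μ.vir j)).length = μ.r := by simp
  rw [hlen] at hcre
  exact Fd_mono K N (by have := μ.r_pos; omega) hcre

lemma Hspace_support (K N : ℕ) (f : FockSpace K) (hf : f ∈ Hspace K N)
    (m : Fin K → Bool) (hm : nTrue K m ≠ N) : f m = 0 := by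
  have hle : Hspace K N ≤
      ({ carrier := {g | ∀ m', nTrue K m' ≠ N → g m' = 0}
         add_mem' := fun ha hb m' hm' => by
           show _ + _ = (0:ℝ); rw [ha m' hm', hb m' hm', add_zero]
         zero_mem' := fun m' hm' => rfl
         smul_mem' := fun c g hg m' hm' => by
           show c * _ = (0:ℝ); rw [hg m' hm', mul_zero] } : Submodule ℝ (FockSpace K)) := by
    rw [Hspace, Submodule.span_le]
    rintro g ⟨k, hk, rfl⟩ m' hm'
    have : m' ≠ k := fun h => hm' (h ▸ hk)
    simp [eVec, Pi.single_apply, this]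
  exact hle hf m hm

lemma vCount_le_nTrue (K N : ℕ) (m : Fin K → Bool) : vCount K N m ≤ nTrue K m :=
  Finset.card_le_card (fun j hj => by
    simp only [Finset.mem_filter, Finset.mem_univ, true_and] at *
    exact hj.2)

lemma cluster_raise (K N : ℕ) (hX : ExcInvariant K N) (T : Hspace K N →L[ℝ] Hspace K N)
    (hT : T ∈ clusterSpace K N hX) :
    ∀ d, ∀ x : Hspace K N, (x : FockSpace K) ∈ Fd K N d →
      ((T x : Hspace K N) : FockSpace K) ∈ Fd K N (d + 1) := by
  have hle : clusterSpace K N hX ≤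
      ({ carrier := {S | ∀ d, ∀ x : Hspace K N, (x : FockSpace K) ∈ Fd K N d →
            ((S x : Hspace K N) : FockSpace K) ∈ Fd K N (d + 1)}
         add_mem' := fun {a b} ha hb d x hx => by
           simpa using (Fd K N (d+1)).add_mem (ha d x hx) (hb d x hx)
         zero_mem' := fun d x hx => by simpa using (Fd K N (d+1)).zero_mem
         smul_mem' := fun c S hS d x hx => by
           simpa using (Fd K N (d+1)).smul_mem c (hS d x hx) } :
        Submodule ℝ (Hspace K N →L[ℝ] Hspace K N)) := by
    rw [clusterSpace, Submodule.span_le]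
    rintro S ⟨μ, rfl⟩ d x hx
    have : ((excResL K N hX μ x : Hspace K N) : FockSpace K) = excOp K N μ (x : FockSpace K) := by
      simp [excResL]
    rw [this]
    exact excOp_raise K N μ d _ hx
  exact hle hT

/-- every cluster operator is nilpotent of order at most N+1, and its
exponential equals the finite sum ∑_{n=0}^{N} Tⁿ/n!. -/
theorem cluster_nilpotent_exp_finite_sum
    (K N : ℕ) (hN : 0 < N) (hK : N < K) (hX : ExcInvariant K N) :
    ∀ T ∈ clusterSpace K N hX,
      T ^ (N + 1) = 0 ∧
      NormedSpace.exp T = ∑ n ∈ Finset.range (N + 1), (n.factorial : ℝ)⁻¹ • T ^ n := by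
  intro T hT
  have hraise := cluster_raise K N hX T hT
  have hpow : ∀ n (x : Hspace K N), (((T ^ n) x : Hspace K N) : FockSpace K) ∈ Fd K N n := by
    intro n
    induction n with
    | zero => intro x m hm; omega
    | succ n ih =>
      intro x
      have h1 : (T ^ (n + 1)) x = T ((T ^ n) x) := by
        rw [pow_succ']; rfl
      rw [h1]
      exact hraise n _ (ih x)
  have hnil : T ^ (N + 1) = 0 := by
    refine ContinuousLinearMap.ext fun x => ?_
    have hx := hpow (N + 1) x
    have hmem := ((T ^ (N + 1)) x).2
    have : (((T ^ (N + 1)) x : Hspace K N) : FockSpace K) = 0 := by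
      funext m
      by_cases hm : vCount K N m < N + 1
      · exact hx m hm
      · refine Hspace_support K N _ hmem m ?_
        have := vCount_le_nTrue K N m
        omega
    rw [ContinuousLinearMap.zero_apply]
    exact Subtype.ext (this.trans (ZeroMemClass.coe_zero _).symm)
  refine ⟨hnil, ?_⟩
  rw [NormedSpace.exp_eq_tsum ℝ]
  refine tsum_eq_sum ?_
  intro n hn
  rw [Finset.mem_range, not_lt] at hn
  have : T ^ n = 0 := by
    have := pow_eq_zero_of_le hn hnil
    simpa using this
  simp [this]

end CC
end
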